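/- Let T be a tree with non-negative integer node weights w, and let c be a node such that every connected component of T minus c has total weight at most w(T)/2 (a w-centroid). Then the connected components of T minus c can be partitioned into two forests F1 and F2 such that both w(F1) and w(F2) are at most 2·w(T)/3. -/

import Mathlib

/-!
Each component of `T \ {c}` weighs at most `W/2`, where `W = w(T)`, and together they weigh
`t ≤ W`. Among the sets `S` of components with `3 w(S) ≥ t` take one of least weight, so that
`3 w(Sᶜ) ≤ 2t`. If `S` contains a component of weight at most `t/3`, dropping it breaks the
constraint, hence `3 w(S) < 2t`; otherwise a single component of `S` is admissible by itself,
hence `w(S) ≤ W/2`.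
-/

open scoped Classical

/-- The total weight of the vertices in the connected component `K` of the graph `H`
(on a finite vertex type), for node weights `w`. -/
noncomputable def compWeight {α : Type*} [Fintype α] (H : SimpleGraph α)
    (w : α → ℕ) (K : H.ConnectedComponent) : ℕ :=
  ∑ v : α, if H.connectedComponentMk v = K then w v else 0

namespace Finset

theorem exists_three_mul_sum_le_and_three_mul_sum_compl_le {ι : Type*} [Fintype ι]
    (a : ι → ℕ) (W : ℕ) (ha : ∀ i, 2 * a i ≤ W) (hsum : ∑ i, a i ≤ W) :
    ∃ S : Finset ι, 3 * ∑ i ∈ S, a i ≤ 2 * W ∧ 3 * ∑ i ∈ Sᶜ, a i ≤ 2 * W := by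
  set t := ∑ i, a i
  have hne : (univ.filter fun S : Finset ι => t ≤ 3 * ∑ i ∈ S, a i).Nonempty :=
    ⟨univ, by simp [t]; omega⟩
  obtain ⟨S, hS, hSmin⟩ := exists_min_image _ (fun S => ∑ i ∈ S, a i) hne
  simp only [mem_filter, mem_univ, true_and] at hS hSmin
  have hcompl : ∑ i ∈ Sᶜ, a i + ∑ i ∈ S, a i = t := sum_compl_add_sum S a
  refine ⟨S, ?_, by omega⟩
  by_contra! hlarge
  obtain ⟨i, hiS, hai⟩ := exists_ne_zero_of_sum_ne_zero (s := S) (f := a) (by omega)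
  have herase : ∑ j ∈ S.erase i, a j + a i = ∑ j ∈ S, a j := sum_erase_add S a hiS
  by_cases hsmall : 3 * a i ≤ t
  · have hSerase : 3 * ∑ j ∈ S.erase i, a j < t := by
      by_contra! h
      have := hSmin _ h
      omega
    omega
  · have hSi : ∑ j ∈ S, a j ≤ a i := by simpa using hSmin {i} (by simp; omega)
    have := ha i
    omega

end Finset

theorem SimpleGraph.sum_compWeight {α : Type*} [Fintype α] (H : SimpleGraph α)
    [Fintype H.ConnectedComponent] (w : α → ℕ) :
    ∑ K, compWeight H w K = ∑ v, w v := by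
  unfold compWeight
  rw [Finset.sum_comm]
  simp

theorem centroid_bipartition {V : Type*} [Fintype V] (T : SimpleGraph V)
    (w : V → ℕ) (c : V)
    (hcentroid : ∀ K : (T.induce {v : V | v ≠ c}).ConnectedComponent,
      2 * compWeight (T.induce {v : V | v ≠ c}) (fun v => w v.1) K ≤ ∑ v : V, w v) :
    ∃ s : (T.induce {v : V | v ≠ c}).ConnectedComponent → Bool,
      3 * (∑ K : (T.induce {v : V | v ≠ c}).ConnectedComponent,
          if s K then compWeight (T.induce {v : V | v ≠ c}) (fun v => w v.1) K else 0)
        ≤ 2 * ∑ v : V, w v ∧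
      3 * (∑ K : (T.induce {v : V | v ≠ c}).ConnectedComponent,
          if s K then 0 else compWeight (T.induce {v : V | v ≠ c}) (fun v => w v.1) K)
        ≤ 2 * ∑ v : V, w v := by
  have hsum : ∑ K, compWeight (T.induce {v : V | v ≠ c}) (fun v => w v.1) K ≤ ∑ v, w v := by
    rw [SimpleGraph.sum_compWeight, ← Fintype.sum_subtype_add_sum_subtype (· ≠ c) w]
    exact Nat.le_add_right _ _
  obtain ⟨S, hS, hSc⟩ :=
    Finset.exists_three_mul_sum_le_and_three_mul_sum_compl_le _ _ hcentroid hsum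
  refine ⟨(· ∈ S), ?_, ?_⟩
  · simpa [← Finset.sum_filter] using hS
  · simpa [Finset.sum_ite, Finset.compl_eq_univ_sdiff, Finset.filter_not] using hSc
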